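/- Let p and q be two patterns. (1) If p induces q, then ad(p) ≤ ad(q). (2) If p and q are equivalent, then ad(p) = ad(q). -/

import Mathlib

/-- A numerical semigroup: an additive submonoid of ℕ with finite complement. -/
def IsNumericalSemigroup (S : Set ℕ) : Prop :=
  0 ∈ S ∧ (∀ a ∈ S, ∀ b ∈ S, a + b ∈ S) ∧ Sᶜ.Finite

/-- Evaluation of a pattern (list of coefficients a₁,…,aₙ) at s₁,…,sₙ. -/
def patEval (p : List ℤ) (s : ℕ → ℕ) : ℤ :=
  ∑ i ∈ Finset.range p.length, p.getD i 0 * (s i : ℤ)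

/-- `S` admits the pattern `p`: p(s₁,…,sₙ) ∈ S for all s₁ ≥ ⋯ ≥ sₙ in S. -/
def AdmitsPat (S : Set ℕ) (p : List ℤ) : Prop :=
  ∀ s : ℕ → ℕ, (∀ i, s i ∈ S) → (∀ i j, i ≤ j → s j ≤ s i) →
    ∃ m ∈ S, (m : ℤ) = patEval p s

/-- A pattern is admissible if it is admitted by some numerical semigroup. -/
def Admissible (p : List ℤ) : Prop :=
  ∃ S : Set ℕ, IsNumericalSemigroup S ∧ AdmitsPat S p

/-- The derivative p' of a pattern. -/
def pderiv : List ℤ → List ℤ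
  | [] => []
  | a :: q => if a = 1 then q else (a - 1) :: q

/-- The admissibility degree: least k such that p⁽ᵏ⁾ is not admissible, or ∞. -/
noncomputable def adDeg (p : List ℤ) : ℕ∞ :=
  sInf ((fun m : ℕ => (m : ℕ∞)) '' {m : ℕ | ¬ Admissible (pderiv^[m] p)})

/-- The partial sum bᵢ = a₁ + ⋯ + aᵢ of the coefficients of `p`. -/
def psum (p : List ℤ) (i : ℕ) : ℤ :=
  ∑ j ∈ Finset.range i, p.getD j 0

/-- p₁ induces p₂ if every numerical semigroup admitting p₁ also admits p₂. -/
def Induces (p q : List ℤ) : Prop :=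
  ∀ S : Set ℕ, IsNumericalSemigroup S → AdmitsPat S p → AdmitsPat S q

/-!
`pderiv^[k] p` is admissible iff every partial sum `bᵢ` of `p` either ends a strictly increasing
run `0 = b₀ < b₁ < ⋯ < bᵢ` or is at least `k`, so it suffices to show that this criterion passes
from `p` to every `q` that `p` induces. If `q` fails it, let `β = bᵢ < k` be its least offending
partial sum and `b_{d+1} < b_d` a descent with `d < i` (strict since the coefficients of `q` are
nonzero). Then `β < b_d`, and for `M = b_d + 1` the numerical semigroup
`⟨M, M + 1⟩ ∪ [(β + 1) M, ∞)` admits every pattern meeting the criterion for `β + 1`, in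
particular `p`, while the nonincreasing sequence `M + 1, …, M + 1, M, …, M, 0, …` (switching at
`d` and `i`) sends `q` to the gap `M β + b_d`.
-/

lemma psum_zero (p : List ℤ) : psum p 0 = 0 := by simp [psum]

lemma psum_succ (p : List ℤ) (i : ℕ) : psum p (i + 1) = psum p i + p.getD i 0 :=
  Finset.sum_range_succ _ _

lemma psum_cons_succ (a : ℤ) (t : List ℤ) (i : ℕ) : psum (a :: t) (i + 1) = a + psum t i := by
  simp [psum, Finset.sum_range_succ', add_comm]

lemma patEval_cons (a : ℤ) (t : List ℤ) (s : ℕ → ℕ) :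
    patEval (a :: t) s = a * s 0 + patEval t (fun i => s (i + 1)) := by
  simp [patEval, Finset.sum_range_succ', add_comm]

lemma patEval_add (p : List ℤ) (s t : ℕ → ℕ) :
    patEval p (fun i => s i + t i) = patEval p s + patEval p t := by
  simp [patEval, mul_add, Finset.sum_add_distrib]

lemma patEval_indicator (p : List ℤ) {i : ℕ} (hi : i ≤ p.length) (x : ℕ) :
    patEval p (fun l => if l < i then x else 0) = x * psum p i := by
  have hfilter : (Finset.range p.length).filter (· < i) = Finset.range i := by
    ext l; simp only [Finset.mem_filter, Finset.mem_range]; omega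
  simp [patEval, psum, Nat.cast_ite, Finset.sum_ite, hfilter, Finset.mul_sum, mul_comm]

def IncreasingUpTo (p : List ℤ) (i : ℕ) : Prop :=
  ∀ j < i, psum p j < psum p (j + 1)

/-- Differentiating `k` times removes `k` units from the front of `p`, dropping coefficients as
they reach zero; a nonpositive coefficient is never dropped, so every later partial sum `bᵢ`
survives as `bᵢ - k`. -/
def PsumCriterion (p : List ℤ) (k : ℕ) : Prop :=
  ∀ i ≤ p.length, IncreasingUpTo p i ∨ (k : ℤ) ≤ psum p i

lemma increasingUpTo_zero (p : List ℤ) : IncreasingUpTo p 0 := fun _ h => absurd h (Nat.not_lt_zero _)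

lemma IncreasingUpTo.psum_nonneg {p : List ℤ} {i : ℕ} (h : IncreasingUpTo p i) :
    0 ≤ psum p i := by
  induction i with
  | zero => simp [psum_zero]
  | succ i ih =>
    exact (ih fun j hj => h j (Nat.lt_succ_of_lt hj)).trans (h i (Nat.lt_succ_self i)).le

lemma IncreasingUpTo.getD_pos {p : List ℤ} {i : ℕ} (h : IncreasingUpTo p i) {l : ℕ} (hl : l < i) :
    0 < p.getD l 0 := by
  have := h l hl
  rw [psum_succ] at this
  omega

lemma increasingUpTo_cons_succ (a : ℤ) (t : List ℤ) (i : ℕ) :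
    IncreasingUpTo (a :: t) (i + 1) ↔ 0 < a ∧ IncreasingUpTo t i := by
  simp only [IncreasingUpTo, Nat.forall_lt_succ_left, psum_cons_succ, psum_zero, add_zero,
    add_lt_add_iff_left]

lemma psumCriterion_cons (a : ℤ) (t : List ℤ) (k : ℕ) :
    PsumCriterion (a :: t) k ↔
      ∀ i ≤ t.length, (0 < a ∧ IncreasingUpTo t i) ∨ (k : ℤ) ≤ a + psum t i := by
  simp only [PsumCriterion, List.length_cons, ← Nat.lt_succ_iff, Nat.forall_lt_succ_left,
    increasingUpTo_cons_succ, psum_cons_succ, increasingUpTo_zero, true_or, true_and]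

lemma PsumCriterion.mono {p : List ℤ} {k k' : ℕ} (h : PsumCriterion p k) (hk : k' ≤ k) :
    PsumCriterion p k' := fun i hi =>
  (h i hi).imp_right fun hpsum => le_trans (by exact_mod_cast hk) hpsum

lemma PsumCriterion.psum_nonneg {p : List ℤ} {k : ℕ} (h : PsumCriterion p k) {i : ℕ}
    (hi : i ≤ p.length) : 0 ≤ psum p i :=
  (h i hi).elim IncreasingUpTo.psum_nonneg fun hpsum => le_trans (by positivity) hpsum

lemma psumCriterion_pderiv (p : List ℤ) (k : ℕ) :
    PsumCriterion (pderiv p) k ↔ PsumCriterion p (k + 1) := by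
  rcases p with _ | ⟨a, t⟩
  · simp [pderiv, PsumCriterion, increasingUpTo_zero]
  by_cases ha : a = 1
  · subst ha
    rw [show pderiv (1 :: t) = t by simp [pderiv], psumCriterion_cons, PsumCriterion]
    simp only [zero_lt_one, true_and]
    push_cast
    refine forall₂_congr fun i _ => or_congr_right ?_
    omega
  · simp only [pderiv, ha, if_false, psumCriterion_cons]
    push_cast
    refine forall₂_congr fun i _ => or_congr (and_congr_left' ?_) ?_ <;> omega

lemma nonneg_mul_add_patEval (p : List ℤ) {s : ℕ → ℕ} (hs : Antitone s) {c : ℤ}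
    (hc : ∀ i ≤ p.length, 0 ≤ c + psum p i) : 0 ≤ c * s 0 + patEval p s := by
  induction p generalizing c s with
  | nil => simpa [patEval, psum_zero] using mul_nonneg (hc 0 le_rfl) (Nat.cast_nonneg (s 0))
  | cons a t ih =>
    have hca : 0 ≤ c + a := by simpa [psum_cons_succ, psum_zero] using hc 1 (by simp)
    have ht := ih (s := fun i => s (i + 1)) (hs.comp_monotone (fun _ _ h => by omega)) (c := c + a)
      fun i hi => by simpa [psum_cons_succ, add_assoc] using hc (i + 1) (by simpa using hi)
    have hs01 : (s 1 : ℤ) ≤ s 0 := by exact_mod_cast hs (Nat.zero_le 1)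
    rw [patEval_cons]
    nlinarith

lemma mul_le_mul_add_patEval (p : List ℤ) {s : ℕ → ℕ} (hs : Antitone s) {c L : ℤ} {m : ℕ}
    (hm : m < p.length) (hc : ∀ i ≤ p.length, 0 ≤ c + psum p i)
    (hL : ∀ i ≤ p.length, m < i → L ≤ c + psum p i) : L * s m ≤ c * s 0 + patEval p s := by
  induction p generalizing c s m with
  | nil => simp at hm
  | cons a t ih =>
    have hshift : Antitone fun i => s (i + 1) := hs.comp_monotone fun _ _ h => by omega
    have hs01 : (s 1 : ℤ) ≤ s 0 := by exact_mod_cast hs (Nat.zero_le 1)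
    have hca : 0 ≤ c + a := by simpa [psum_cons_succ, psum_zero] using hc 1 (by simp)
    rw [patEval_cons]
    rcases m with _ | m
    · have hcaL : L ≤ c + a := by simpa [psum_cons_succ, psum_zero] using hL 1 (by simp) Nat.one_pos
      have ht := nonneg_mul_add_patEval t hshift (c := c + a - L) fun i hi => by
        have := hL (i + 1) (by simpa using hi) (Nat.succ_pos i)
        rw [psum_cons_succ] at this
        linarith
      nlinarith
    · have ht := ih hshift (c := c + a) (m := m) (by simpa using hm)
        (fun i hi => by simpa [psum_cons_succ, add_assoc] using hc (i + 1) (by simpa using hi))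
        (fun i hi hmi => by
          simpa [psum_cons_succ, add_assoc] using hL (i + 1) (by simpa using hi) (by omega))
      nlinarith

lemma psum_nonneg_of_admitsPat {S : Set ℕ} (hS : IsNumericalSemigroup S) {p : List ℤ}
    (h : AdmitsPat S p) {i : ℕ} (hi : i ≤ p.length) : 0 ≤ psum p i := by
  obtain ⟨x, hxS, hx⟩ := (compl_compl S ▸ hS.2.2.infinite_compl).exists_gt 0
  obtain ⟨m, -, hm⟩ := h (fun l => if l < i then x else 0)
    (fun l => by split_ifs; exacts [hxS, hS.1]) (fun l₁ l₂ h => by split_ifs <;> omega)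
  rw [patEval_indicator p hi] at hm
  have hx' : (0 : ℤ) < x := by exact_mod_cast hx
  nlinarith [Int.natCast_nonneg m]

lemma isNumericalSemigroup_univ : IsNumericalSemigroup (Set.univ : Set ℕ) :=
  ⟨trivial, fun _ _ _ _ => trivial, by simp⟩

lemma admissible_iff_psum_nonneg (p : List ℤ) :
    Admissible p ↔ ∀ i ≤ p.length, 0 ≤ psum p i := by
  refine ⟨fun ⟨S, hS, h⟩ i hi => psum_nonneg_of_admitsPat hS h hi, fun h => ?_⟩
  refine ⟨Set.univ, isNumericalSemigroup_univ, fun s _ hs => ?_⟩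
  have := nonneg_mul_add_patEval p (fun i j hij => hs i j hij) (c := 0) (by simpa using h)
  exact ⟨(patEval p s).toNat, trivial, by simpa using this⟩

lemma admissible_iterate_pderiv_iff (k : ℕ) (p : List ℤ) :
    Admissible (pderiv^[k] p) ↔ PsumCriterion p k := by
  induction k generalizing p with
  | zero =>
    rw [Function.iterate_zero_apply, admissible_iff_psum_nonneg]
    exact ⟨fun h i hi => Or.inr (by simpa using h i hi), fun h i hi => PsumCriterion.psum_nonneg h hi⟩
  | succ k ih => rw [Function.iterate_succ_apply, ih, psumCriterion_pderiv]

lemma exists_mem_eq_patEval {S : AddSubmonoid ℕ} {p : List ℤ} {s : ℕ → ℕ} (hs : ∀ i, s i ∈ S)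
    (h : ∀ i < p.length, 0 ≤ p.getD i 0 ∨ s i = 0) : ∃ m ∈ S, (m : ℤ) = patEval p s := by
  refine ⟨∑ i ∈ Finset.range p.length, (p.getD i 0).toNat * s i,
    S.sum_mem fun i _ => S.nsmul_mem (hs i) _, ?_⟩
  push_cast
  refine Finset.sum_congr rfl fun i hi => ?_
  rcases h i (Finset.mem_range.1 hi) with hpos | hzero
  · rw [Int.toNat_of_nonneg hpos]
  · simp [hzero]

/-- The numerical semigroup `⟨M, M + 1⟩ ∪ [(β + 1) M, ∞)`; the elements of `⟨M, M + 1⟩` are the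
`x` with `t M ≤ x ≤ t (M + 1)` for some `t`. -/
def gapSemigroup (M β : ℕ) : AddSubmonoid ℕ where
  carrier := {x | (β + 1) * M ≤ x ∨ ∃ t, t * M ≤ x ∧ x ≤ t * (M + 1)}
  zero_mem' := Or.inr ⟨0, by simp, by simp⟩
  add_mem' := by
    rintro x y (hx | ⟨t, htx, hxt⟩) (hy | ⟨u, huy, hyu⟩)
    · exact Or.inl (by omega)
    · exact Or.inl (by omega)
    · exact Or.inl (by omega)
    · exact Or.inr ⟨t + u, by rw [add_mul]; omega, by rw [add_mul]; omega⟩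

lemma mem_gapSemigroup {M β x : ℕ} :
    x ∈ gapSemigroup M β ↔ (β + 1) * M ≤ x ∨ ∃ t, t * M ≤ x ∧ x ≤ t * (M + 1) := by
  rfl

lemma isNumericalSemigroup_gapSemigroup (M β : ℕ) :
    IsNumericalSemigroup (gapSemigroup M β : Set ℕ) :=
  ⟨(gapSemigroup M β).zero_mem, fun _ hx _ hy => (gapSemigroup M β).add_mem hx hy,
    (Set.finite_Iio ((β + 1) * M)).subset fun x hx => by
      simp only [Set.mem_compl_iff, SetLike.mem_coe, mem_gapSemigroup, not_or] at hx
      exact Set.mem_Iio.2 (Nat.lt_of_not_le hx.1)⟩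

lemma le_of_mem_gapSemigroup {M β x : ℕ} (hx : x ∈ gapSemigroup M β) (hx0 : x ≠ 0) : M ≤ x := by
  rcases mem_gapSemigroup.1 hx with hx | ⟨t, htx, hxt⟩
  · exact le_trans (Nat.le_mul_of_pos_left M (Nat.succ_pos β)) hx
  · rcases t with _ | t
    · omega
    · exact le_trans (Nat.le_mul_of_pos_left M (Nat.succ_pos t)) htx

lemma mul_add_notMem_gapSemigroup {β D : ℕ} (h : β < D) :
    (D + 1) * β + D ∉ gapSemigroup (D + 1) β := by
  rw [mem_gapSemigroup]
  rintro (hlarge | ⟨t, hlow, hhigh⟩)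
  · nlinarith
  · rcases Nat.lt_or_ge β t with hβt | htβ <;> nlinarith

/-- Below the first descent `b_{d+1} ≤ b_d` all coefficients are positive, so `r(s)` is a
nonnegative combination of elements of `S` unless `s_d ≠ 0`; then `s_d ≥ M` and every partial
sum from `b_{d+1}` on is at least `β + 1`, which forces `r(s) ≥ (β + 1) s_d ≥ (β + 1) M`. -/
lemma admitsPat_of_psumCriterion {S : AddSubmonoid ℕ} {M β : ℕ}
    (hlarge : ∀ x, (β + 1) * M ≤ x → x ∈ S) (hmin : ∀ x ∈ S, x ≠ 0 → M ≤ x) {r : List ℤ}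
    (hr : PsumCriterion r (β + 1)) : AdmitsPat S r := by
  classical
  intro s hs hanti
  by_cases hinc : IncreasingUpTo r r.length
  · exact exists_mem_eq_patEval hs fun i hi => Or.inl (hinc.getD_pos hi).le
  have hdesc : ∃ d, d < r.length ∧ psum r (d + 1) ≤ psum r d := by
    simpa [IncreasingUpTo] using hinc
  set d := Nat.find hdesc
  obtain ⟨hdr, hdesc_d⟩ : d < r.length ∧ psum r (d + 1) ≤ psum r d := Nat.find_spec hdesc
  have hinc_d : IncreasingUpTo r d := fun l hl => by
    have := Nat.find_min hdesc hl
    omega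
  by_cases hsd : s d = 0
  · refine exists_mem_eq_patEval hs fun i _ => ?_
    rcases Nat.lt_or_ge i d with hid | hdi
    · exact Or.inl (hinc_d.getD_pos hid).le
    · exact Or.inr (Nat.eq_zero_of_le_zero (hsd ▸ hanti d i hdi))
  have hbound : ((β + 1 : ℕ) : ℤ) * s d ≤ patEval r s := by
    simpa using mul_le_mul_add_patEval r (fun i j hij => hanti i j hij) hdr (c := 0)
      (by simpa using fun i hi => hr.psum_nonneg hi)
      (fun i hi hdi => by
        simpa using (hr i hi).resolve_left fun hinc_i => (hinc_i d hdi).not_ge hdesc_d)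
  have hM : ((β + 1) * M : ℕ) ≤ (β + 1 : ℕ) * (s d : ℤ) := by
    push_cast
    exact mul_le_mul_of_nonneg_left (by exact_mod_cast hmin _ (hs d) hsd) (by positivity)
  refine ⟨(patEval r s).toNat, hlarge _ ?_, Int.toNat_of_nonneg (by linarith)⟩
  exact_mod_cast (Int.le_toNat (by linarith)).2 (hM.trans hbound)

lemma not_admitsPat_gapSemigroup {q : List ℤ} {d i : ℕ} (hdi : d < i) (hi : i ≤ q.length)
    {β D : ℕ} (hβ : psum q i = β) (hD : psum q d = D) (hβD : β < D) :
    ¬ AdmitsPat (gapSemigroup (D + 1) β : Set ℕ) q := by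
  intro hadm
  have hmem : ∀ x, x = 0 ∨ x = D + 1 ∨ x = D + 1 + 1 → x ∈ gapSemigroup (D + 1) β := by
    rintro x (rfl | rfl | rfl)
    · exact (gapSemigroup (D + 1) β).zero_mem
    · exact mem_gapSemigroup.2 (Or.inr ⟨1, by omega, by omega⟩)
    · exact mem_gapSemigroup.2 (Or.inr ⟨1, by omega, by omega⟩)
  obtain ⟨m, hm, hmeq⟩ := hadm (fun l => (if l < i then D + 1 else 0) + (if l < d then 1 else 0))
    (fun l => hmem _ (by split_ifs <;> omega))
    (fun l₁ l₂ h => by split_ifs <;> omega)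
  rw [patEval_add, patEval_indicator q hi, patEval_indicator q (by omega), hβ, hD] at hmeq
  have hm' : m = (D + 1) * β + D := by
    zify
    rw [hmeq]
    push_cast
    ring
  exact mul_add_notMem_gapSemigroup hβD (hm' ▸ hm)

lemma Induces.admissible {p q : List ℤ} (hpq : Induces p q) (hp : Admissible p) : Admissible q :=
  let ⟨S, hS, h⟩ := hp; ⟨S, hS, hpq S hS h⟩

theorem PsumCriterion.of_induces {p q : List ℤ} (hq : ∀ a ∈ q, a ≠ 0) (hpq : Induces p q)
    {k : ℕ} (hp : PsumCriterion p k) : PsumCriterion q k := by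
  classical
  by_contra hfail
  set F := (Finset.range (q.length + 1)).filter fun i => ¬ IncreasingUpTo q i
  obtain ⟨i₀, hi₀F, hi₀k⟩ : ∃ i ∈ F, psum q i < k := by
    simp only [PsumCriterion, not_forall, not_or, not_le] at hfail
    obtain ⟨i, hi, hinc, hk⟩ := hfail
    exact ⟨i, Finset.mem_filter.2 ⟨Finset.mem_range.2 (Nat.lt_succ_of_le hi), hinc⟩, hk⟩
  obtain ⟨i, hiF, hmin⟩ := F.exists_min_image (psum q) ⟨i₀, hi₀F⟩
  obtain ⟨hi_range, hinc⟩ := Finset.mem_filter.1 hiF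
  have hi : i ≤ q.length := Nat.lt_succ_iff.1 (Finset.mem_range.1 hi_range)
  have hq_adm : Admissible q :=
    hpq.admissible ((admissible_iff_psum_nonneg p).2 fun _ hj => hp.psum_nonneg hj)
  obtain ⟨β, hβ⟩ := Int.eq_ofNat_of_zero_le ((admissible_iff_psum_nonneg q).1 hq_adm i hi)
  obtain ⟨d, hdi, hdesc⟩ : ∃ d < i, psum q (d + 1) ≤ psum q d := by
    simpa [IncreasingUpTo] using hinc
  have hdF : d + 1 ∈ F := Finset.mem_filter.2
    ⟨Finset.mem_range.2 (by omega), fun hinc_d => (hinc_d d d.lt_succ_self).not_ge hdesc⟩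
  have hcoeff : q.getD d 0 ≠ 0 := by
    rw [List.getD_eq_getElem _ _ (by omega)]
    exact hq _ (List.getElem_mem _)
  have hβd : (β : ℤ) < psum q d := by
    have := hmin _ hdF
    rw [psum_succ] at hdesc this
    omega
  obtain ⟨D, hD⟩ := Int.eq_ofNat_of_zero_le (le_trans (by positivity) hβd.le)
  have hβk : β + 1 ≤ k := by
    have := hmin i₀ hi₀F
    omega
  exact not_admitsPat_gapSemigroup hdi hi hβ hD (by omega) <| hpq _
    (isNumericalSemigroup_gapSemigroup _ _) <| admitsPat_of_psumCriterion
      (fun _ hx => mem_gapSemigroup.2 (Or.inl hx)) (fun _ => le_of_mem_gapSemigroup)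
      (hp.mono hβk)

lemma adDeg_le_adDeg {p q : List ℤ}
    (h : ∀ m, Admissible (pderiv^[m] p) → Admissible (pderiv^[m] q)) : adDeg p ≤ adDeg q :=
  sInf_le_sInf (Set.image_mono fun m hm hp => hm (h m hp))

theorem Induces.adDeg_le {p q : List ℤ} (hq : ∀ a ∈ q, a ≠ 0) (hpq : Induces p q) :
    adDeg p ≤ adDeg q :=
  adDeg_le_adDeg fun m => by
    simpa only [admissible_iterate_pderiv_iff] using PsumCriterion.of_induces hq hpq

/-- (1) If p induces q then ad(p) ≤ ad(q); (2) if p and q are equivalent then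
ad(p) = ad(q). -/
theorem stmt_10 (p q : List ℤ) (hp : ∀ a ∈ p, a ≠ 0) (hq : ∀ a ∈ q, a ≠ 0) :
    (Induces p q → adDeg p ≤ adDeg q) ∧
    (Induces p q ∧ Induces q p → adDeg p = adDeg q) :=
  ⟨Induces.adDeg_le hq, fun ⟨hpq, hqp⟩ => le_antisymm (hpq.adDeg_le hq) (hqp.adDeg_le hp)⟩
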